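/- Let H be an undirected graph, k ≥ 3, and let G be the directed graph obtained from H by subdividing each edge e = {u,v} into w_e with arcs (u, w_e), (v, w_e). If an allocation π of vertices of G to k agents achieves total dissatisfaction Σ_{i=1}^{k} δ_π(i) = k·|V(G)| − Σ_{v ∈ V(G)} |succ[v]|, then for each edge e = {u,v} of H, the three vertices u, v, w_e are assigned to three pairwise different agents; hence restricting π to the original vertices yields a proper k-coloring of H. -/

import Mathlib

/-- `u` is dominated by the set `P` of allocated items: some `v ∈ P` equals `u`
or has a directed path to `u`. -/
def Dominated {V : Type*} (A : V → V → Prop) (P : Set V) (u : V) : Prop :=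
  ∃ v ∈ P, Relation.ReflTransGen A v u

/-- Dissatisfaction of an agent receiving the set `P`: the number of vertices not
dominated by `P`. -/
noncomputable def diss {V : Type*} (A : V → V → Prop) (P : Set V) : ℕ :=
  {u : V | ¬ Dominated A P u}.ncard

/-- Satisfaction of an agent receiving the set `P`: the number of vertices
dominated by `P`. -/
noncomputable def sat {V : Type*} (A : V → V → Prop) (P : Set V) : ℕ :=
  {u : V | Dominated A P u}.ncard

/-- The directed graph with arc relation `A` is acyclic. -/
def Acyclic {V : Type*} (A : V → V → Prop) : Prop :=
  ∀ v, ¬ Relation.TransGen A v v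

/-- `P` is an antichain: no vertex of `P` is reachable from another vertex of `P`. -/
def IsAntichainIn {V : Type*} (A : V → V → Prop) (P : Set V) : Prop :=
  ∀ x ∈ P, ∀ y ∈ P, x ≠ y → ¬ Relation.ReflTransGen A x y

/-- The subdivision orientation of an undirected graph `H`. -/
def SubdivArc {V : Type*} (H : SimpleGraph V) :
    (V ⊕ H.edgeSet) → (V ⊕ H.edgeSet) → Prop :=
  fun x y =>
    match x, y with
    | Sum.inl u, Sum.inr e => u ∈ e.val
    | _, _ => False

/-!
Every agent dominates at most `∑ v ∈ π i, |succ[v]|` vertices, and the bundles are disjoint, so the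
agents together dominate at most `∑ v, |succ[v]|` vertices; this is the stated lower bound on the
total dissatisfaction. In the subdivision orientation every vertex has at most three
predecessors, so for `k ≥ 3` the bound is not truncated, and attaining it forces both estimates to
be tight: every vertex is allocated, and two vertices of one bundle never share a successor. The
vertices `u`, `v`, `w_e` of an edge `e = uv` pairwise share the successor `w_e`.
-/

open Finset Function Relation

theorem Finset.card_biUnion_lt_sum_card_of_not_disjoint {ι β : Type*}
    [DecidableEq ι] [DecidableEq β]
    {s : Finset ι} {f : ι → Finset β} {x y : ι} (hx : x ∈ s) (hy : y ∈ s) (hxy : x ≠ y)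
    (h : ¬ Disjoint (f x) (f y)) :
    #(s.biUnion f) < ∑ i ∈ s, #(f i) := by
  have hfy : f y ⊆ (s.erase x).biUnion f := subset_biUnion_of_mem f (mem_erase.2 ⟨hxy.symm, hy⟩)
  calc #(s.biUnion f) = #(f x ∪ (s.erase x).biUnion f) := by
        rw [← biUnion_insert, insert_erase hx]
    _ < #(f x) + #((s.erase x).biUnion f) :=
        (card_union_le _ _).lt_of_ne fun heq =>
          h ((card_union_eq_card_add_card.1 heq).mono_right hfy)
    _ ≤ #(f x) + ∑ i ∈ s.erase x, #(f i) := Nat.add_le_add_left card_biUnion_le _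
    _ = ∑ i ∈ s, #(f i) := add_sum_erase s (fun i => #(f i)) hx

section Allocation

open scoped Classical

variable {α ι : Type*} [Fintype α] [Fintype ι] (A : α → α → Prop)

/-- The closed successor set `succ[v]`. -/
noncomputable def succFinset (v : α) : Finset α := {u | ReflTransGen A v u}

lemma ncard_setOf_eq_card_filter (p : α → Prop) : {x | p x}.ncard = #{x | p x} := by
  rw [Set.ncard_eq_toFinset_card', Set.toFinset_ofPred]

lemma ncard_setOf_reflTransGen (v : α) :
    {u | ReflTransGen A v u}.ncard = #(succFinset A v) :=
  ncard_setOf_eq_card_filter _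

lemma diss_add_sat (P : Set α) : diss A P + sat A P = Fintype.card α := by
  rw [diss, sat, add_comm, ← Set.compl_ofPred, Set.ncard_add_ncard_compl, Nat.card_eq_fintype_card]

lemma sat_eq_card_biUnion (P : Set α) : sat A P = #(P.toFinset.biUnion (succFinset A)) := by
  rw [sat, Set.ncard_eq_toFinset_card']
  congr 1
  ext u
  simp only [Set.mem_toFinset, mem_biUnion, succFinset, mem_filter, mem_univ, true_and]
  rfl

lemma sat_le_sum_card_succFinset (P : Set α) :
    sat A P ≤ ∑ v ∈ P.toFinset, #(succFinset A v) :=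
  (sat_eq_card_biUnion A P).trans_le card_biUnion_le

lemma sat_lt_sum_card_succFinset {P : Set α} {x y z : α} (hx : x ∈ P) (hy : y ∈ P) (hxy : x ≠ y)
    (hxz : ReflTransGen A x z) (hyz : ReflTransGen A y z) :
    sat A P < ∑ v ∈ P.toFinset, #(succFinset A v) := by
  rw [sat_eq_card_biUnion]
  refine card_biUnion_lt_sum_card_of_not_disjoint (Set.mem_toFinset.2 hx) (Set.mem_toFinset.2 hy)
    hxy (not_disjoint_iff.2 ⟨z, ?_, ?_⟩) <;> simpa [succFinset]

variable {A}

lemma sum_sum_card_succFinset_eq {π : ι → Set α} (hdisj : Pairwise (Disjoint on π)) :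
    ∑ i, ∑ v ∈ (π i).toFinset, #(succFinset A v) =
      ∑ v ∈ univ.biUnion fun i => (π i).toFinset, #(succFinset A v) :=
  (sum_biUnion fun _ _ _ _ hij => Set.disjoint_toFinset.2 (hdisj hij)).symm

-- Without `hS` the subtraction in `hopt` could truncate to `0`.
lemma sum_sat_eq_of_sum_diss_eq {π : ι → Set α}
    (hS : ∑ v, #(succFinset A v) ≤ Fintype.card ι * Fintype.card α)
    (hopt : ∑ i, diss A (π i) = Fintype.card ι * Fintype.card α - ∑ v, #(succFinset A v)) :
    ∑ i, sat A (π i) = ∑ v, #(succFinset A v) := by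
  have htotal : ∑ i, diss A (π i) + ∑ i, sat A (π i) = Fintype.card ι * Fintype.card α := by
    simp [← sum_add_distrib, diss_add_sat]
  omega

theorem exists_mem_of_sum_diss_eq {π : ι → Set α} (hdisj : Pairwise (Disjoint on π))
    (hS : ∑ v, #(succFinset A v) ≤ Fintype.card ι * Fintype.card α)
    (hopt : ∑ i, diss A (π i) = Fintype.card ι * Fintype.card α - ∑ v, #(succFinset A v))
    (x : α) : ∃ i, x ∈ π i := by
  by_contra! hx
  have hlt : ∑ v ∈ univ.biUnion (fun i => (π i).toFinset), #(succFinset A v) <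
      ∑ v, #(succFinset A v) :=
    sum_lt_sum_of_subset (subset_univ _) (mem_univ x) (by simpa using hx)
      (card_pos.2 ⟨x, mem_filter.2 ⟨mem_univ x, .refl⟩⟩) fun _ _ _ => Nat.zero_le _
  have hle := sum_le_sum fun i (_ : i ∈ univ) => sat_le_sum_card_succFinset A (π i)
  rw [sum_sum_card_succFinset_eq hdisj, sum_sat_eq_of_sum_diss_eq hS hopt] at hle
  omega

theorem ne_of_sum_diss_eq {π : ι → Set α} (hdisj : Pairwise (Disjoint on π))
    (hS : ∑ v, #(succFinset A v) ≤ Fintype.card ι * Fintype.card α)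
    (hopt : ∑ i, diss A (π i) = Fintype.card ι * Fintype.card α - ∑ v, #(succFinset A v))
    ⦃i j : ι⦄ ⦃x y z : α⦄ (hx : x ∈ π i) (hy : y ∈ π j) (hxy : x ≠ y)
    (hxz : ReflTransGen A x z) (hyz : ReflTransGen A y z) : i ≠ j := by
  rintro rfl
  have hlt : ∑ i, sat A (π i) < ∑ i, ∑ v ∈ (π i).toFinset, #(succFinset A v) :=
    sum_lt_sum (fun i _ => sat_le_sum_card_succFinset A (π i))
      ⟨i, mem_univ i, sat_lt_sum_card_succFinset A hx hy hxy hxz hyz⟩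
  have hle : ∑ v ∈ univ.biUnion (fun i => (π i).toFinset), #(succFinset A v) ≤
      ∑ v, #(succFinset A v) :=
    sum_le_sum_of_subset (subset_univ _)
  rw [← sum_sum_card_succFinset_eq hdisj, ← sum_sat_eq_of_sum_diss_eq hS hopt] at hle
  omega

lemma sum_card_succFinset_le_of_card_pred_le {m : ℕ}
    (hpred : ∀ z : α, {v | ReflTransGen A v z}.ncard ≤ m) :
    ∑ v, #(succFinset A v) ≤ m * Fintype.card α := by
  calc ∑ v, #(succFinset A v) = ∑ z, #{v | ReflTransGen A v z} :=
        sum_card_bipartiteAbove_eq_sum_card_bipartiteBelow _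
    _ ≤ ∑ _z : α, m :=
        sum_le_sum fun z _ => ncard_setOf_eq_card_filter (ReflTransGen A · z) ▸ hpred z
    _ = m * Fintype.card α := by simp [mul_comm]

end Allocation

section Subdivision

variable {V : Type*} {H : SimpleGraph V}

lemma reflTransGen_subdivArc_iff {x y : V ⊕ H.edgeSet} :
    ReflTransGen (SubdivArc H) x y ↔ x = y ∨ SubdivArc H x y := by
  refine ⟨fun h => ?_, fun h => h.elim (· ▸ .refl) .single⟩
  rcases h.cases_head with rfl | ⟨c, hxc, hcy⟩
  · exact .inl rfl
  rcases hcy.cases_head with rfl | ⟨d, hcd, -⟩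
  · exact .inr hxc
  rcases x with _ | _ <;> rcases c with _ | _ <;> rcases d with _ | _ <;>
    simp [SubdivArc] at hxc hcd

lemma ncard_pred_subdivArc_le_three (z : V ⊕ H.edgeSet) :
    {v | ReflTransGen (SubdivArc H) v z}.ncard ≤ 3 := by
  classical
  obtain ⟨a, b, hab⟩ : ∃ a b : V, ∀ v, ReflTransGen (SubdivArc H) v z →
      v ∈ ({z, .inl a, .inl b} : Finset _) := by
    rcases z with u | ⟨e, he⟩
    · refine ⟨u, u, fun v hv => ?_⟩
      rcases reflTransGen_subdivArc_iff.1 hv with rfl | h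
      · simp
      · rcases v with _ | _ <;> simp [SubdivArc] at h
    · induction e using Sym2.ind with
      | _ a b =>
        refine ⟨a, b, fun v hv => ?_⟩
        rcases reflTransGen_subdivArc_iff.1 hv with rfl | h
        · simp
        · rcases v with _ | _ <;> simp_all [SubdivArc]
  exact (Set.ncard_le_ncard fun v hv => hab v hv).trans
    ((Set.ncard_coe_finset _).trans_le card_le_three)

lemma reflTransGen_subdivArc_edge {u v : V} (h : H.Adj u v) :
    ReflTransGen (SubdivArc H) (.inl u) (.inr ⟨s(u, v), H.mem_edgeSet.2 h⟩) ∧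
      ReflTransGen (SubdivArc H) (.inl v) (.inr ⟨s(u, v), H.mem_edgeSet.2 h⟩) :=
  ⟨.single (Sym2.mem_mk_left u v), .single (Sym2.mem_mk_right u v)⟩

end Subdivision

theorem stmt10_general {V : Type*} [Fintype V]
    (H : SimpleGraph V) [DecidableRel H.Adj]
    (k : ℕ) (hk : 3 ≤ k)
    (π : Fin k → Set (V ⊕ H.edgeSet))
    (hdisj : ∀ i j, i ≠ j → Disjoint (π i) (π j))
    (hopt : ∑ i, diss (SubdivArc H) (π i) =
      k * Fintype.card (V ⊕ H.edgeSet) -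
        ∑ v : V ⊕ H.edgeSet,
          {u : V ⊕ H.edgeSet | Relation.ReflTransGen (SubdivArc H) v u}.ncard) :
    (∀ u v (h : H.Adj u v), ∃ i j l : Fin k, i ≠ j ∧ i ≠ l ∧ j ≠ l ∧
      Sum.inl u ∈ π i ∧ Sum.inl v ∈ π j ∧
      (Sum.inr ⟨s(u, v), (H.mem_edgeSet).mpr h⟩ : V ⊕ H.edgeSet) ∈ π l) ∧
    ∃ c : V → Fin k, (∀ u v, H.Adj u v → c u ≠ c v) ∧ ∀ u, Sum.inl u ∈ π (c u) := by
  have hdisj' : Pairwise (Disjoint on π) := fun i j => hdisj i j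
  have hS := (sum_card_succFinset_le_of_card_pred_le (ncard_pred_subdivArc_le_three (H := H))).trans
    (Nat.mul_le_mul_right (Fintype.card (V ⊕ H.edgeSet)) (hk.trans_eq (Fintype.card_fin k).symm))
  replace hopt : ∑ i, diss (SubdivArc H) (π i) = Fintype.card (Fin k) *
      Fintype.card (V ⊕ H.edgeSet) - ∑ v, #(succFinset (SubdivArc H) v) := by
    simpa only [Fintype.card_fin, ncard_setOf_reflTransGen] using hopt
  have hcover := exists_mem_of_sum_diss_eq hdisj' hS hopt
  have hsep := ne_of_sum_diss_eq hdisj' hS hopt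
  refine ⟨fun u v h => ?_, ?_⟩
  · obtain ⟨i, hi⟩ := hcover (.inl u)
    obtain ⟨j, hj⟩ := hcover (.inl v)
    obtain ⟨l, hl⟩ := hcover (.inr ⟨s(u, v), H.mem_edgeSet.2 h⟩)
    obtain ⟨hu, hv⟩ := reflTransGen_subdivArc_edge h
    exact ⟨i, j, l, hsep hi hj (by simp [h.ne]) hu hv, hsep hi hl (by simp) hu .refl,
      hsep hj hl (by simp) hv .refl, hi, hj, hl⟩
  · choose c hc using fun u => hcover (.inl u)
    refine ⟨c, fun u v h => ?_, hc⟩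
    obtain ⟨hu, hv⟩ := reflTransGen_subdivArc_edge h
    exact hsep (hc u) (hc v) (by simp [h.ne]) hu hv

theorem stmt10 {V : Type*} [Fintype V] [DecidableEq V]
    (H : SimpleGraph V) [DecidableRel H.Adj]
    (k : ℕ) (hk : 3 ≤ k)
    (π : Fin k → Set (V ⊕ H.edgeSet))
    (hdisj : ∀ i j, i ≠ j → Disjoint (π i) (π j))
    (hopt : ∑ i, diss (SubdivArc H) (π i) =
      k * Fintype.card (V ⊕ H.edgeSet) -
        ∑ v : V ⊕ H.edgeSet,
          {u : V ⊕ H.edgeSet | Relation.ReflTransGen (SubdivArc H) v u}.ncard) :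
    (∀ u v (h : H.Adj u v), ∃ i j l : Fin k, i ≠ j ∧ i ≠ l ∧ j ≠ l ∧
      Sum.inl u ∈ π i ∧ Sum.inl v ∈ π j ∧
      (Sum.inr ⟨s(u, v), (H.mem_edgeSet).mpr h⟩ : V ⊕ H.edgeSet) ∈ π l) ∧
    ∃ c : V → Fin k, (∀ u v, H.Adj u v → c u ≠ c v) ∧ ∀ u, Sum.inl u ∈ π (c u) :=
  stmt10_general H k hk π hdisj hopt
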